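/- For every c ≥ (4n-1)/(4n-3) (with n ≥ 1), the function φ(t,τ) = (c+1) K_{2,2}(S_{2n}^+; t,τ) - c K_{2,2}(S_n^+; t,τ) is nonpositive on [a,b]^2, where K_{2,2}(S_m^+; t,τ) = K_2(Q^{Tr}; t) K_2(Q_m^{Tr}; τ) + K_2(Q^{Tr}; τ) K_2(Q_m^{Tr}; t) - K_2(Q_m^{Tr}; t) K_2(Q_m^{Tr}; τ). Moreover c = (4n-1)/(4n-3) is the smallest constant with this property. -/

import Mathlib

/-!
Put `H = (b - a) / n` and let `d ∈ [0, H/2]` be the distance from `t` to the nearest node of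
the coarse grid. Every Peano kernel involved has the shape `trapKernel h x = -x (h - x) / 2`:
`K₂(Q_n; t) = trapKernel H d`, and, because the fine grid consists of the coarse nodes and the
midpoints, `K₂(Q_{2n}; t) = trapKernel (H/2) d`, while `K₂(Q; t) ≤ trapKernel (b - a) d`.

For fixed `d, d'`, the function `φ` is affine in the two values of `K₂(Q; ·)`, with nonnegative
slopes once `c ≥ 1`; at the extreme values (`t = a + d`, `τ = a + d'`) it equals
`-d d' ((c (4n-3) - (4n-1)) H² + 4 (n H (d + d') - d d')) / 16` (`localPhi_eq`).
This is `≤ 0` for `c ≥ (4n-1)/(4n-3)`, and on the diagonal `d = d' → 0` its sign is that of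
`(4n-1) - c (4n-3)`, which gives sharpness.
-/

/-- Second Peano kernel of the simple trapezium rule on `[a,b]`. -/
noncomputable def peanoK2TrapSimple (a b t : ℝ) : ℝ := (1 / 2) * (t - a) * (t - b)

/-- Second Peano kernel of the composite trapezium rule. -/
noncomputable def peanoK2Trap (a b : ℝ) (n : ℕ) (t : ℝ) : ℝ :=
  (b - t) ^ 2 / 2 - ∑ i ∈ Finset.range (n + 1),
    (if i = 0 ∨ i = n then (b - a) / (2 * n) else (b - a) / n) *
      max (a + i * ((b - a) / n) - t) 0

/-- Peano kernel `K_{2,2}(S_m^+; t,τ)`. -/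
noncomputable def K22plus (a b : ℝ) (m : ℕ) (t τ : ℝ) : ℝ :=
  peanoK2TrapSimple a b t * peanoK2Trap a b m τ +
    peanoK2TrapSimple a b τ * peanoK2Trap a b m t
    - peanoK2Trap a b m t * peanoK2Trap a b m τ

open Finset

noncomputable def trapKernel (h x : ℝ) : ℝ := -(x * (h - x)) / 2

lemma trapKernel_sub_left (h x : ℝ) : trapKernel h (h - x) = trapKernel h x := by
  unfold trapKernel; ring

lemma peanoK2TrapSimple_eq_trapKernel (a b t : ℝ) :
    peanoK2TrapSimple a b t = trapKernel (b - a) (t - a) := by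
  unfold peanoK2TrapSimple trapKernel; ring

lemma sq_half_sub_trapezium_sum (h e : ℝ) (N : ℕ) :
    (e + N * h) ^ 2 / 2 - h * ∑ j ∈ range N, (e + j * h) - h / 2 * (e + N * h)
      = trapKernel h e := by
  induction N with
  | zero => unfold trapKernel; simp only [CharP.cast_eq_zero, range_zero, sum_empty]; ring
  | succ N ih => rw [sum_range_succ, ← ih]; push_cast; ring

lemma peanoK2Trap_eq_trapKernel {a b t : ℝ} {m k : ℕ} (hk : k < m)
    (hl : a + k * ((b - a) / m) ≤ t) (hr : t ≤ a + (k + 1) * ((b - a) / m)) :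
    peanoK2Trap a b m t = trapKernel ((b - a) / m) (t - (a + k * ((b - a) / m))) := by
  obtain ⟨N, rfl⟩ : ∃ N, m = k + 1 + N := ⟨m - (k + 1), by omega⟩
  unfold peanoK2Trap
  set M : ℝ := ((k + 1 + N : ℕ) : ℝ) with hM
  set h := (b - a) / M with hh
  have hb : b = a + M * h := by rw [hh, mul_div_cancel₀ _ (by positivity)]; ring
  have hMc : M = k + 1 + N := by rw [hM]; push_cast; ring
  have h0 : 0 ≤ h := by linarith
  have hhalf : (b - a) / (2 * M) = h / 2 := by rw [hh]; field_simp
  set e := a + (k + 1) * h - t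
  have left_zero : ∀ i ∈ range (k + 1),
      (if i = 0 ∨ i = k + 1 + N then (b - a) / (2 * M) else h) * max (a + i * h - t) 0 = 0 := by
    intro i hi
    have : (i : ℝ) ≤ k := by exact_mod_cast Nat.lt_succ_iff.mp (mem_range.mp hi)
    rw [max_eq_right (by nlinarith), mul_zero]
  have interior : ∀ j ∈ range N,
      (if k + 1 + j = 0 ∨ k + 1 + j = k + 1 + N then (b - a) / (2 * M) else h) *
        max (a + ((k + 1 + j : ℕ) : ℝ) * h - t) 0 = h * (e + j * h) := by
    intro j hj
    have hjN := mem_range.mp hj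
    rw [if_neg (by omega), max_eq_left (by push_cast; nlinarith)]
    push_cast; ring
  rw [show k + 1 + N + 1 = (k + 1) + (N + 1) by ring, sum_range_add, sum_eq_zero left_zero,
    zero_add, sum_range_succ, sum_congr rfl interior, if_pos (Or.inr rfl), hhalf,
    max_eq_left (by push_cast; nlinarith), ← mul_sum, show t - (a + k * h) = h - e by ring,
    trapKernel_sub_left, ← sq_half_sub_trapezium_sum h e N, hb, hMc]
  push_cast
  simp only [e]
  ring

lemma peanoK2Trap_left_cell {a b d : ℝ} {m : ℕ} (hm : 0 < m) (hd0 : 0 ≤ d)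
    (hd : d ≤ (b - a) / m) : peanoK2Trap a b m (a + d) = trapKernel ((b - a) / m) d := by
  simpa using peanoK2Trap_eq_trapKernel (a := a) (b := b) (t := a + d) (k := 0) hm
    (by simpa) (by simpa)

lemma exists_cell {a b t : ℝ} {m : ℕ} (hm : 0 < m) (ht : t ∈ Set.Icc a b) :
    ∃ k < m, a + k * ((b - a) / m) ≤ t ∧ t ≤ a + (k + 1) * ((b - a) / m) := by
  have hmR : (0 : ℝ) < m := by exact_mod_cast hm
  have hb : m * ((b - a) / m) = b - a := mul_div_cancel₀ _ hmR.ne'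
  rcases ht.2.eq_or_lt with rfl | hlt
  · have h0 : 0 ≤ (t - a) / m := div_nonneg (by linarith [ht.1]) hmR.le
    refine ⟨m - 1, Nat.sub_one_lt hm.ne', ?_, ?_⟩ <;> rw [Nat.cast_pred hm] <;> nlinarith
  · have hh : 0 < (b - a) / m := div_pos (by linarith [ht.1]) hmR
    have hx : 0 ≤ (t - a) / ((b - a) / m) := div_nonneg (by linarith [ht.1]) hh.le
    refine ⟨⌊(t - a) / ((b - a) / m)⌋₊, ?_, ?_, ?_⟩
    · rw [Nat.floor_lt hx, div_lt_iff₀ hh]; linarith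
    · have := Nat.floor_le hx
      rw [le_div_iff₀ hh] at this; linarith
    · have := Nat.lt_floor_add_one ((t - a) / ((b - a) / m))
      rw [div_lt_iff₀ hh] at this; linarith

lemma trapKernel_le_trapKernel {ℓ d x : ℝ} (hdx : d ≤ x) (hxd : x ≤ ℓ - d) :
    trapKernel ℓ x ≤ trapKernel ℓ d := by
  unfold trapKernel; nlinarith

lemma div_natCast_two_mul (a b : ℝ) (n : ℕ) :
    (b - a) / ((2 * n : ℕ) : ℝ) = (b - a) / n / 2 := by
  push_cast; rw [div_div, mul_comm]

lemma exists_node_dist {a b t : ℝ} {n : ℕ} (hn : 0 < n) (ht : t ∈ Set.Icc a b) :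
    ∃ d, 0 ≤ d ∧ d ≤ (b - a) / n / 2 ∧
      peanoK2Trap a b n t = trapKernel ((b - a) / n) d ∧
      peanoK2Trap a b (2 * n) t = trapKernel ((b - a) / n / 2) d ∧
      peanoK2TrapSimple a b t ≤ trapKernel (b - a) d := by
  obtain ⟨k, hk, hl, hr⟩ := exists_cell hn ht
  have hcoarse := peanoK2Trap_eq_trapKernel hk hl hr
  set H := (b - a) / n
  have hnH : n * H = b - a := mul_div_cancel₀ _ (by positivity)
  have hkn : (k : ℝ) + 1 ≤ n := by exact_mod_cast hk
  set x := t - (a + k * H)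
  have hsimple : ∀ d, d ≤ x → d ≤ H - x →
      peanoK2TrapSimple a b t ≤ trapKernel (b - a) d := by
    intro d hdx hdx'
    rw [peanoK2TrapSimple_eq_trapKernel]
    apply trapKernel_le_trapKernel <;> nlinarith [ht.1]
  rcases le_total x (H / 2) with hxH | hxH
  · have hfine := peanoK2Trap_eq_trapKernel (a := a) (b := b) (t := t) (m := 2 * n)
      (k := 2 * k)
      (by omega) (by rw [div_natCast_two_mul]; push_cast; linarith)
      (by rw [div_natCast_two_mul]; push_cast; linarith)
    rw [div_natCast_two_mul] at hfine
    push_cast at hfine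
    refine ⟨x, by linarith, hxH, hcoarse, ?_, hsimple x le_rfl (by linarith)⟩
    rw [hfine]; congr 1; ring
  · have hfine := peanoK2Trap_eq_trapKernel (a := a) (b := b) (t := t) (m := 2 * n)
      (k := 2 * k + 1)
      (by omega) (by rw [div_natCast_two_mul]; push_cast; linarith)
      (by rw [div_natCast_two_mul]; push_cast; linarith)
    rw [div_natCast_two_mul] at hfine
    push_cast at hfine
    refine ⟨H - x, by linarith, by linarith, by rw [trapKernel_sub_left]; exact hcoarse, ?_,
      hsimple _ (by linarith) le_rfl⟩
    rw [hfine, ← trapKernel_sub_left]; congr 1; ring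

noncomputable def k22 (s s' q q' : ℝ) : ℝ := s * q' + s' * q - q * q'

lemma K22plus_eq_k22 (a b : ℝ) (m : ℕ) (t τ : ℝ) :
    K22plus a b m t τ = k22 (peanoK2TrapSimple a b t) (peanoK2TrapSimple a b τ)
      (peanoK2Trap a b m t) (peanoK2Trap a b m τ) := rfl

noncomputable def localPhi (c H d d' s s' : ℝ) : ℝ :=
  (c + 1) * k22 s s' (trapKernel (H / 2) d) (trapKernel (H / 2) d')
    - c * k22 s s' (trapKernel H d) (trapKernel H d')

lemma localPhi_eq (c N H d d' s s' : ℝ) :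
    localPhi c H d d' s s'
      = (s - trapKernel (N * H) d) * (d' * ((c - 1) * H + 2 * d') / 4)
        + (s' - trapKernel (N * H) d') * (d * ((c - 1) * H + 2 * d) / 4)
        - d * d' * ((c * (4 * N - 3) - (4 * N - 1)) * H ^ 2
          + 4 * (N * H * (d + d') - d * d')) / 16 := by
  unfold localPhi k22 trapKernel; ring

lemma localPhi_nonpos {c N H d d' s s' : ℝ} (hN : 1 ≤ N) (hH : 0 ≤ H)
    (hc : (4 * N - 1) / (4 * N - 3) ≤ c) (hd : d ∈ Set.Icc 0 (H / 2))
    (hd' : d' ∈ Set.Icc 0 (H / 2)) (hs : s ≤ trapKernel (N * H) d)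
    (hs' : s' ≤ trapKernel (N * H) d') :
    localPhi c H d d' s s' ≤ 0 := by
  obtain ⟨hd0, hdH⟩ := hd
  obtain ⟨hd0', hdH'⟩ := hd'
  have hc' : 4 * N - 1 ≤ c * (4 * N - 3) := (div_le_iff₀ (by linarith)).mp hc
  have hc1 : 1 ≤ c := by nlinarith
  have hslope : 0 ≤ d' * ((c - 1) * H + 2 * d') := by positivity
  have hslope' : 0 ≤ d * ((c - 1) * H + 2 * d) := by positivity
  have hconst : 0 ≤ d * d' * ((c * (4 * N - 3) - (4 * N - 1)) * H ^ 2
      + 4 * (N * H * (d + d') - d * d')) := by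
    have hd'N : d' ≤ N * H := by nlinarith
    have : d * d' ≤ N * H * (d + d') := by
      nlinarith [mul_le_mul_of_nonneg_left hd'N hd0,
        mul_nonneg (mul_nonneg (by linarith : 0 ≤ N) hH) hd0']
    have : 0 ≤ c * (4 * N - 3) - (4 * N - 1) := by linarith
    positivity
  rw [localPhi_eq c N H d d' s s']
  nlinarith [mul_nonneg (sub_nonneg.mpr hs) hslope, mul_nonneg (sub_nonneg.mpr hs') hslope']

lemma le_of_localPhi_diag_nonpos {c N H : ℝ} (hN : 1 ≤ N) (hH : 0 < H)
    (h : ∀ d ∈ Set.Ioo 0 (H / 2),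
      localPhi c H d d (trapKernel (N * H) d) (trapKernel (N * H) d) ≤ 0) :
    (4 * N - 1) / (4 * N - 3) ≤ c := by
  rw [div_le_iff₀ (by linarith), ← sub_nonpos]
  refine nonpos_of_mul_nonpos_left (b := H ^ 2) ?_ (by positivity)
  have hlim : Filter.Tendsto (fun d : ℝ => 8 * N * H * d) (nhdsWithin 0 (Set.Ioi 0)) (nhds 0) :=
    ((continuous_const.mul continuous_id).tendsto' 0 0 (by simp)).mono_left nhdsWithin_le_nhds
  refine ge_of_tendsto hlim ?_
  filter_upwards [Ioo_mem_nhdsGT (by linarith : (0 : ℝ) < H / 2)] with d hd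
  have hφ := h d hd
  rw [localPhi_eq c N H d d _ _] at hφ
  simp only [sub_self, zero_mul, zero_add, zero_sub, neg_nonpos] at hφ
  have := nonneg_of_mul_nonneg_right (nonneg_of_mul_nonneg_left hφ (by norm_num))
    (mul_pos hd.1 hd.1)
  nlinarith [hd.1]

/-- For every `c ≥ (4n-1)/(4n-3)` the function
`φ = (c+1) K_{2,2}(S_{2n}^+) - c K_{2,2}(S_n^+)` is nonpositive on `[a,b]^2`,
and `c = (4n-1)/(4n-3)` is the smallest constant with this property. -/
theorem Splus_kernel_difference (a b : ℝ) (hab : a < b) (n : ℕ) (hn : 0 < n) :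
    (∀ c : ℝ, (4 * (n : ℝ) - 1) / (4 * n - 3) ≤ c →
      ∀ t ∈ Set.Icc a b, ∀ τ ∈ Set.Icc a b,
        (c + 1) * K22plus a b (2 * n) t τ - c * K22plus a b n t τ ≤ 0) ∧
    (∀ c : ℝ, (∀ t ∈ Set.Icc a b, ∀ τ ∈ Set.Icc a b,
        (c + 1) * K22plus a b (2 * n) t τ - c * K22plus a b n t τ ≤ 0) →
      (4 * (n : ℝ) - 1) / (4 * n - 3) ≤ c) := by
  have hH : 0 < (b - a) / n := div_pos (by linarith) (by positivity)
  have hnH : b - a = n * ((b - a) / n) := (mul_div_cancel₀ _ (by positivity)).symm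
  have hn1 : (1 : ℝ) ≤ n := by exact_mod_cast hn
  refine ⟨fun c hc t ht τ hτ => ?_, fun c hc => ?_⟩
  · obtain ⟨d, hd0, hd, hcoarse, hfine, hsimple⟩ := exists_node_dist hn ht
    obtain ⟨d', hd0', hd', hcoarse', hfine', hsimple'⟩ := exists_node_dist hn hτ
    rw [hnH] at hsimple hsimple'
    rw [K22plus_eq_k22, K22plus_eq_k22, hcoarse, hfine, hcoarse', hfine']
    exact localPhi_nonpos hn1 hH.le hc ⟨hd0, hd⟩ ⟨hd0', hd'⟩ hsimple hsimple'
  · refine le_of_localPhi_diag_nonpos hn1 hH fun d hd => ?_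
    have had : a + d ∈ Set.Icc a b := ⟨by linarith [hd.1], by nlinarith [hd.2]⟩
    have hφ := hc _ had _ had
    rwa [K22plus_eq_k22, K22plus_eq_k22, peanoK2TrapSimple_eq_trapKernel, add_sub_cancel_left,
      hnH, peanoK2Trap_left_cell hn hd.1.le (by linarith [hd.2]),
      peanoK2Trap_left_cell (by omega) hd.1.le (by rw [div_natCast_two_mul]; linarith [hd.2]),
      div_natCast_two_mul] at hφ
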